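/- In a random DFA where each state is independently accepting with probability 1/2, if p and q are states and w_1, ..., w_m are words such that the 2m states δ(p, w_1), ..., δ(p, w_m), δ(q, w_1), ..., δ(q, w_m) satisfy δ(p, w_i) ≠ δ(q, w_i) for each i and the states δ(p, w_1), ..., δ(p, w_m) are pairwise distinct, and moreover the bipartite 'distinguishing graph' on these states (edges {δ(p,w_i), δ(q,w_i)}) contains a matching of size m, then the probability (over the random accepting set) that no word w_i distinguishes p from q is at most 2^{-m}. -/

import Mathlib

/-!
Flipping the values of an accepting set `A` at the states `δ(q, w_i)` along an arbitrary
`ε : Fin m → Bool` is injective on pairs `(A, ε)` with `A` in the event that no `w_i`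
distinguishes `p` from `q`: the states `δ(p, w_i)` are untouched, and they determine the old
values at the `δ(q, w_i)`. Hence the event has at most `2 ^ n / 2 ^ m` elements.
-/

open MeasureTheory ENNReal Function

section Flip

variable {α ι : Type*}

/-- Flip the value of `A` at `b i` exactly when `ε i` holds. -/
noncomputable def flipAlong (b : ι → α) (ε : ι → Bool) (A : α → Bool) : α → Bool :=
  fun y => xor (A y) (extend b ε (fun _ => false) y)

theorem flipAlong_apply_of_notMem_range {b : ι → α} (ε : ι → Bool) (A : α → Bool) {y : α}
    (hy : y ∉ Set.range b) : flipAlong b ε A y = A y := by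
  simp [flipAlong, extend_apply' _ _ _ (fun ⟨i, hi⟩ => hy ⟨i, hi⟩)]

theorem flipAlong_apply_self {b : ι → α} (hb : Injective b) (ε : ι → Bool) (A : α → Bool)
    (i : ι) : flipAlong b ε A (b i) = xor (A (b i)) (ε i) := by
  simp [flipAlong, hb.extend_apply]

theorem injective_flipAlong_of_forall_eq {a b : ι → α} (hb : Injective b)
    (hab : ∀ i j, a i ≠ b j) :
    Injective fun x : {A : α → Bool // ∀ i, A (a i) = A (b i)} × (ι → Bool) =>
      flipAlong b x.2 x.1.1 := by
  rintro ⟨⟨A, hA⟩, ε⟩ ⟨⟨A', hA'⟩, ε'⟩ h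
  have ha : ∀ i, A (a i) = A' (a i) := fun i => by
    have hi : a i ∉ Set.range b := fun ⟨j, hj⟩ => hab i j hj.symm
    simpa only [flipAlong_apply_of_notMem_range _ _ hi] using congrFun h (a i)
  have hAA' : A = A' := funext fun y => by
    by_cases hy : y ∈ Set.range b
    · obtain ⟨i, rfl⟩ := hy
      rw [← hA, ← hA', ha]
    · simpa only [flipAlong_apply_of_notMem_range _ _ hy] using congrFun h y
  subst hAA'
  have hεε' : ε = ε' := funext fun i => by
    simpa only [flipAlong_apply_self hb, Bool.xor_right_inj] using congrFun h (b i)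
  subst hεε'
  rfl

theorem card_subtype_forall_eq_mul_two_pow_le [Fintype α] [DecidableEq α] [Fintype ι]
    {a b : ι → α} (hb : Injective b) (hab : ∀ i j, a i ≠ b j) :
    Fintype.card {A : α → Bool // ∀ i, A (a i) = A (b i)} * 2 ^ Fintype.card ι ≤
      2 ^ Fintype.card α := by
  classical
  simpa [Fintype.card_prod, Fintype.card_fun] using
    Fintype.card_le_of_injective _ (injective_flipAlong_of_forall_eq hb hab)

theorem uniformOfFintype_toMeasure_setOf_forall_eq_le [Fintype α] [DecidableEq α] [Fintype ι]
    {a b : ι → α} (hb : Injective b) (hab : ∀ i j, a i ≠ b j) :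
    (PMF.uniformOfFintype (α → Bool)).toMeasure {A | ∀ i, A (a i) = A (b i)} ≤
      (2 : ℝ≥0∞)⁻¹ ^ Fintype.card ι := by
  have hcard : (Fintype.card {A : α → Bool // ∀ i, A (a i) = A (b i)} : ℝ≥0∞) *
      2 ^ Fintype.card ι ≤ 2 ^ Fintype.card α := by
    exact_mod_cast card_subtype_forall_eq_mul_two_pow_le hb hab
  rw [PMF.toMeasure_uniformOfFintype_apply _ .of_discrete, Fintype.card_fun, Fintype.card_bool,
    Nat.cast_pow, Nat.cast_two]
  refine ENNReal.div_le_of_le_mul ?_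
  calc (Fintype.card {A : α → Bool // ∀ i, A (a i) = A (b i)} : ℝ≥0∞)
      = Fintype.card {A : α → Bool // ∀ i, A (a i) = A (b i)} * 2 ^ Fintype.card ι *
          2⁻¹ ^ Fintype.card ι := by
        rw [mul_assoc, ← mul_pow, ENNReal.mul_inv_cancel two_ne_zero ofNat_ne_top, one_pow,
          mul_one]
    _ ≤ 2⁻¹ ^ Fintype.card ι * 2 ^ Fintype.card α := by
        rw [mul_comm]
        gcongr

end Flip

section Pairs

variable {α ι : Type*} [DecidableEq α] {a b : ι → α}

theorem injective_snd_of_pairwise_disjoint_pair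
    (h : ∀ i j, i ≠ j → Disjoint ({a i, b i} : Finset α) {a j, b j}) : Injective b := by
  intro i j hij
  by_contra hne
  exact Finset.disjoint_left.mp (h i j hne) (show b i ∈ ({a i, b i} : Finset α) by simp)
    (by simp [hij])

theorem fst_ne_snd_of_pairwise_disjoint_pair (hne : ∀ i, a i ≠ b i)
    (h : ∀ i j, i ≠ j → Disjoint ({a i, b i} : Finset α) {a j, b j}) (i j : ι) :
    a i ≠ b j := by
  rcases eq_or_ne i j with rfl | hij
  · exact hne i
  · intro hab
    exact Finset.disjoint_left.mp (h i j hij) (show a i ∈ ({a i, b i} : Finset α) by simp)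
      (by simp [hab])

end Pairs

theorem matching_words_equivalence_prob_general (n k m : ℕ) (hn : 0 < n)
    (δ : Fin n → Fin k → Fin n) (p q : Fin n) (w : Fin m → List (Fin k))
    (hne : ∀ i : Fin m, (w i).foldl δ p ≠ (w i).foldl δ q)
    (hmatch : ∀ i j : Fin m, i ≠ j →
      Disjoint ({(w i).foldl δ p, (w i).foldl δ q} : Finset (Fin n))
        ({(w j).foldl δ p, (w j).foldl δ q} : Finset (Fin n))) :
    haveI : Nonempty (Fin n) := ⟨⟨0, hn⟩⟩
    (PMF.uniformOfFintype (Fin n → Bool)).toMeasure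
        {A | ∀ i : Fin m, A ((w i).foldl δ p) = A ((w i).foldl δ q)} ≤
      (2 : ℝ≥0∞)⁻¹ ^ m := by
  simpa using uniformOfFintype_toMeasure_setOf_forall_eq_le
    (injective_snd_of_pairwise_disjoint_pair hmatch)
    (fst_ne_snd_of_pairwise_disjoint_pair hne hmatch)

theorem matching_words_equivalence_prob (n k m : ℕ) (hn : 0 < n)
    (δ : Fin n → Fin k → Fin n) (p q : Fin n) (w : Fin m → List (Fin k))
    (hne : ∀ i : Fin m, (w i).foldl δ p ≠ (w i).foldl δ q)
    (hinj : Function.Injective fun i : Fin m => (w i).foldl δ p)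
    (hmatch : ∀ i j : Fin m, i ≠ j →
      Disjoint ({(w i).foldl δ p, (w i).foldl δ q} : Finset (Fin n))
        ({(w j).foldl δ p, (w j).foldl δ q} : Finset (Fin n))) :
    haveI : Nonempty (Fin n) := ⟨⟨0, hn⟩⟩
    (PMF.uniformOfFintype (Fin n → Bool)).toMeasure
        {A | ∀ i : Fin m, A ((w i).foldl δ p) = A ((w i).foldl δ q)} ≤
      (2 : ℝ≥0∞)⁻¹ ^ m :=
  matching_words_equivalence_prob_general n k m hn δ p q w hne hmatch
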